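/- Let α be a nonnegative random variable taking values in [0,H) (0 < H ≤ ∞) with absolutely continuous distribution function F, density f, survival function F̄ = 1 - F positive on [0,H), and finite mean Eα > c > 0. If α is IGFR (its generalized failure rate g(x) = x f(x)/F̄(x) is nondecreasing on (0,H)), then the n-firm Cournot game with payoffs π_i(x_1,…,x_n) = x_i·(E[(α - Σ_j x_j)_+] - c) has exactly one symmetric pure Nash equilibrium. -/

import Mathlib

open MeasureTheory Set Filter Function

noncomputable section

/-- Expected payoff of firm `i` in the `n`-firm Cournot game with stochastic
demand intercept `α` and constant marginal cost `c`. -/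
def payoff {Ω : Type*} [MeasurableSpace Ω] (μ : Measure Ω) (α : Ω → ℝ) (c : ℝ)
    {n : ℕ} (x : Fin n → ℝ) (i : Fin n) : ℝ :=
  x i * ((∫ ω, max (α ω - ∑ j, x j) 0 ∂μ) - c)

/-- Pure Nash equilibrium with nonnegative outputs. -/
def IsNash {Ω : Type*} [MeasurableSpace Ω] (μ : Measure Ω) (α : Ω → ℝ) (c : ℝ)
    {n : ℕ} (x : Fin n → ℝ) : Prop :=
  (∀ i, 0 ≤ x i) ∧
    ∀ i : Fin n, ∀ y : ℝ, 0 ≤ y →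
      payoff μ α c (Function.update x i y) i ≤ payoff μ α c x i

/-- The mean residual demand (MRD) function `m(x) = (1/F̄(x)) ∫_x^H F̄(u) du`
(the survival function vanishes beyond `H`, so the integral may be taken over `(x,∞)`). -/
def mrd (F : ℝ → ℝ) (x : ℝ) : ℝ :=
  (∫ u in Ioi x, (1 - F u)) / (1 - F x)

/-!
Write `P(t) = E[(α - t)₊]` for the expected price at total output `t` and `F̄` for the survival
function, so that `P' = -F̄`. Against rival output `s`, a firm's payoff `y (P(y + s) - c)` has
derivative `Z(y + s)`, where `Z(t) = P(t) - c - (t - s) F̄(t)`, and along the diagonal the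
first-order condition reads `V(t) = P(t) - c - (t / n) F̄(t) = 0` at total output `t`. IGFR yields
the tail bound `(g(t) - 1) P(t) ≤ t F̄(t)` for the generalized failure rate `g`, which makes
`Z' = (t - s) f - 2 F̄` (and likewise `V'`) negative wherever the function exceeds `-c`. Since `f`
is merely integrable this derivative only exists in integrated form, so single crossing is
obtained from strict decrease across every interval on which the function stays above `-c / 2`.
Consequently `Z` changes sign once, making the zero of the marginal payoff a global best
response, and `V` has exactly one positive root, which exists by the intermediate value theorem.
-/

open scoped Topology

def survival (f : ℝ → ℝ) (x : ℝ) : ℝ := ∫ r in Ioi x, f r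

/-- `stopLoss f t = E[(α - t)₊]` when `f` is the density of `α`: the expected price at total
output `t`. -/
def stopLoss (f : ℝ → ℝ) (t : ℝ) : ℝ := ∫ r, max (r - t) 0 * f r

variable {f : ℝ → ℝ}

theorem survival_nonneg (hf0 : ∀ x, 0 ≤ f x) (x : ℝ) : 0 ≤ survival f x :=
  setIntegral_nonneg measurableSet_Ioi fun r _ => hf0 r

theorem stopLoss_nonneg (hf0 : ∀ x, 0 ≤ f x) (t : ℝ) : 0 ≤ stopLoss f t :=
  integral_nonneg fun r => mul_nonneg (le_max_right _ _) (hf0 r)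

theorem antitone_survival (hf0 : ∀ x, 0 ≤ f x) (hf : Integrable f) : Antitone (survival f) :=
  fun _ _ hxy => setIntegral_mono_set hf.integrableOn (.of_forall hf0)
    (Ioi_subset_Ioi hxy).eventuallyLE

theorem continuous_survival (hf : Integrable f) : Continuous (survival f) := by
  have h : survival f = fun x => survival f 0 - ∫ u in (0)..x, f u := funext fun x => by
    rw [← intervalIntegral.integral_Ioi_sub_Ioi' hf.integrableOn hf.integrableOn]
    simp [survival]
  rw [h]
  exact continuous_const.sub (hf.continuous_primitive 0)

theorem integrable_sub_mul (hf : Integrable f) (hrf : Integrable fun r => r * f r) (s : ℝ) :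
    Integrable fun r => (r - s) * f r :=
  (hrf.sub (hf.const_mul s)).congr (.of_forall fun r => by simp only [Pi.sub_apply]; ring)

theorem integrable_max_sub_mul (hf0 : ∀ x, 0 ≤ f x) (hf : Integrable f)
    (hrf : Integrable fun r => r * f r) (t : ℝ) : Integrable fun r => max (r - t) 0 * f r := by
  simpa only [max_mul_of_nonneg _ _ (hf0 _), zero_mul] using (integrable_sub_mul hf hrf t).pos_part

theorem hasDerivAt_stopLoss (hf0 : ∀ x, 0 ≤ f x) (hf : Integrable f)
    (hrf : Integrable fun r => r * f r) (t : ℝ) :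
    HasDerivAt (stopLoss f) (-survival f t) t := by
  have hlip : ∀ r, LipschitzOnWith (Real.nnabs (f r)) (fun y => max (r - y) 0 * f r) univ := by
    refine fun r => (LipschitzWith.of_dist_le_mul fun y y' => ?_).lipschitzOnWith
    rw [Real.dist_eq, Real.dist_eq, Real.coe_nnabs, ← sub_mul, abs_mul, mul_comm (|f r|)]
    refine mul_le_mul_of_nonneg_right ?_ (abs_nonneg _)
    calc |max (r - y) 0 - max (r - y') 0| ≤ |(r - y) - (r - y')| := abs_max_sub_max_le_abs _ _ _
      _ = |y - y'| := by rw [← abs_neg]; ring_nf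
  have hderiv : ∀ r ≠ t, HasDerivAt (fun y => max (r - y) 0 * f r) (-(Ioi t).indicator f r) t := by
    intro r hr
    rcases hr.lt_or_gt with hrt | htr
    · rw [indicator_of_notMem (s := Ioi t) (not_lt.2 hrt.le), neg_zero]
      refine (hasDerivAt_const t 0).congr_of_eventuallyEq ?_
      filter_upwards [Ioi_mem_nhds hrt] with y hy
      rw [max_eq_right (by linarith [mem_Ioi.1 hy]), zero_mul]
    · rw [indicator_of_mem (s := Ioi t) htr]
      refine (((hasDerivAt_id t).const_sub r).mul_const (f r)).congr_of_eventuallyEq ?_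
        |>.congr_deriv (by simp)
      filter_upwards [Iio_mem_nhds htr] with y hy
      rw [max_eq_left (by linarith [mem_Iio.1 hy])]
      rfl
  have key := hasDerivAt_integral_of_dominated_loc_of_lip (x₀ := t) univ_mem
    (.of_forall fun y => (integrable_max_sub_mul hf0 hf hrf y).aestronglyMeasurable)
    (integrable_max_sub_mul hf0 hf hrf t) (hf.indicator measurableSet_Ioi).neg.aestronglyMeasurable
    (.of_forall hlip) hf ((Measure.ae_ne volume t).mono hderiv)
  rw [survival, ← integral_indicator measurableSet_Ioi, ← integral_neg]
  exact key.2

theorem tendsto_stopLoss_atTop (hf0 : ∀ x, 0 ≤ f x) (hf : Integrable f)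
    (hrf : Integrable fun r => r * f r) : Tendsto (stopLoss f) atTop (𝓝 0) := by
  have h : Tendsto (stopLoss f) atTop (𝓝 (∫ _ : ℝ, (0 : ℝ))) := by
    refine tendsto_integral_filter_of_dominated_convergence (fun r => max r 0 * f r)
      (.of_forall fun t => (integrable_max_sub_mul hf0 hf hrf t).aestronglyMeasurable) ?_
      (by simpa using integrable_max_sub_mul hf0 hf hrf 0)
      (.of_forall fun r => tendsto_const_nhds.congr' ?_)
    · filter_upwards [eventually_ge_atTop 0] with t ht
      refine .of_forall fun r => ?_
      rw [Real.norm_of_nonneg (mul_nonneg (le_max_right _ _) (hf0 r))]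
      exact mul_le_mul_of_nonneg_right (max_le_max (by linarith) le_rfl) (hf0 r)
    · filter_upwards [eventually_ge_atTop r] with t ht
      rw [max_eq_right (by linarith), zero_mul]
  simpa using h

theorem integrableOn_Ioi_survival (hf0 : ∀ x, 0 ≤ f x) (hf : Integrable f)
    (hrf : Integrable fun r => r * f r) (t : ℝ) : IntegrableOn (survival f) (Ioi t) := by
  simpa using (integrableOn_Ioi_deriv_of_nonpos' (fun x _ => hasDerivAt_stopLoss hf0 hf hrf x)
    (fun x _ => neg_nonpos.2 (survival_nonneg hf0 x)) (tendsto_stopLoss_atTop hf0 hf hrf)).neg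

theorem integral_Ioi_survival (hf0 : ∀ x, 0 ≤ f x) (hf : Integrable f)
    (hrf : Integrable fun r => r * f r) (t : ℝ) : ∫ u in Ioi t, survival f u = stopLoss f t := by
  have h := integral_Ioi_of_hasDerivAt_of_tendsto' (fun x _ => hasDerivAt_stopLoss hf0 hf hrf x)
    (integrableOn_Ioi_survival hf0 hf hrf t).neg (tendsto_stopLoss_atTop hf0 hf hrf)
  rw [integral_neg] at h
  linarith

theorem stopLoss_eq_zero_of_survival_eq_zero (hf0 : ∀ x, 0 ≤ f x) (hf : Integrable f)
    (hrf : Integrable fun r => r * f r) {t : ℝ} (ht : survival f t = 0) : stopLoss f t = 0 := by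
  rw [← integral_Ioi_survival hf0 hf hrf]
  refine setIntegral_eq_zero_of_forall_eq_zero fun u hu => ?_
  exact le_antisymm (ht ▸ antitone_survival hf0 hf (le_of_lt hu)) (survival_nonneg hf0 u)

theorem sub_mul_survival_add_stopLoss (hf : Integrable f) (hrf : Integrable fun r => r * f r)
    (s t : ℝ) : (t - s) * survival f t + stopLoss f t = ∫ r in Ioi t, (r - s) * f r := by
  have hP : stopLoss f t = ∫ r in Ioi t, ((r - s) * f r - (t - s) * f r) := by
    rw [stopLoss, ← integral_indicator measurableSet_Ioi]
    congr 1 with r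
    by_cases hr : t < r
    · rw [indicator_of_mem (s := Ioi t) hr, max_eq_left (by linarith)]
      ring
    · rw [indicator_of_notMem (s := Ioi t) hr, max_eq_right (by linarith), zero_mul]
  rw [hP, integral_sub (integrable_sub_mul hf hrf s).integrableOn (hf.const_mul _).integrableOn,
    survival, integral_const_mul]
  ring

/-- The expected marginal payoff: with `k = 1` it is the derivative of `y ↦ y (P(y + s) - c)` at
`y = t - s`, and with `k = 1 / n`, `s = 0` it is the first-order condition of a symmetric profile
with total output `t`. -/
def marginalPayoff (f : ℝ → ℝ) (c k s t : ℝ) : ℝ := stopLoss f t - c - k * (t - s) * survival f t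

theorem marginalPayoff_eq_integral (hf0 : ∀ x, 0 ≤ f x) (hf : Integrable f)
    (hrf : Integrable fun r => r * f r) (c k s t : ℝ) :
    marginalPayoff f c k s t =
      (∫ u in Ioi t, ((1 + k) * survival f u - k * ((u - s) * f u))) - c := by
  rw [integral_sub ((integrableOn_Ioi_survival hf0 hf hrf t).const_mul _)
    ((integrable_sub_mul hf hrf s).integrableOn.const_mul _), integral_const_mul,
    integral_const_mul, integral_Ioi_survival hf0 hf hrf, ← sub_mul_survival_add_stopLoss hf hrf,
    marginalPayoff]
  ring

theorem marginalPayoff_sub_marginalPayoff (hf0 : ∀ x, 0 ≤ f x) (hf : Integrable f)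
    (hrf : Integrable fun r => r * f r) (c k s : ℝ) {a b : ℝ} (hab : a ≤ b) :
    marginalPayoff f c k s a - marginalPayoff f c k s b =
      ∫ u in a..b, ((1 + k) * survival f u - k * ((u - s) * f u)) := by
  rw [marginalPayoff_eq_integral hf0 hf hrf, marginalPayoff_eq_integral hf0 hf hrf,
    sub_sub_sub_cancel_right]
  exact intervalIntegral.integral_Ioi_sub_Ioi
    (((integrableOn_Ioi_survival hf0 hf hrf a).const_mul _).sub
      ((integrable_sub_mul hf hrf s).integrableOn.const_mul _)) hab

/-- Monotonicity of the generalized failure rate `x f(x) / F̄(x)`, cleared of denominators so that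
it stays meaningful where `F̄` vanishes. -/
def IsIGFR (f : ℝ → ℝ) : Prop :=
  ∀ u v, 0 < u → u ≤ v → u * f u * survival f v ≤ v * f v * survival f u

theorem isIGFR_of_div_le (hf0 : ∀ x, 0 ≤ f x) (hf : Integrable f)
    (h : ∀ u v, 0 < u → u ≤ v → 0 < survival f v →
      u * f u / survival f u ≤ v * f v / survival f v) : IsIGFR f := by
  intro u v hu huv
  rcases (survival_nonneg hf0 v).eq_or_lt with hv | hv
  · rw [← hv, mul_zero]
    exact mul_nonneg (mul_nonneg (hu.le.trans huv) (hf0 v)) (survival_nonneg hf0 u)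
  · exact (div_le_div_iff₀ (hv.trans_le (antitone_survival hf0 hf huv)) hv).1 (h u v hu huv hv)

/-- The tail bound `(g(t) - 1) P(t) ≤ t F̄(t)`, `g(t) = t f(t) / F̄(t)`: integrate
`u f(u) F̄(t) ≥ t f(t) F̄(u)` over `u > t`. -/
theorem mul_mul_stopLoss_le (hf0 : ∀ x, 0 ≤ f x) (hf : Integrable f)
    (hrf : Integrable fun r => r * f r) (hI : IsIGFR f) {t : ℝ} (ht : 0 < t) :
    t * f t * stopLoss f t ≤ survival f t * (t * survival f t + stopLoss f t) := by
  have hmean := sub_mul_survival_add_stopLoss hf hrf 0 t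
  simp only [sub_zero] at hmean
  rw [hmean, ← integral_Ioi_survival hf0 hf hrf, ← integral_const_mul, ← integral_const_mul]
  refine setIntegral_mono_on ((integrableOn_Ioi_survival hf0 hf hrf t).const_mul _)
    (hrf.integrableOn.const_mul _) measurableSet_Ioi fun u hu => ?_
  have := hI t u ht (le_of_lt hu)
  linarith

theorem mul_sub_mul_lt_survival (hf0 : ∀ x, 0 ≤ f x) (hf : Integrable f)
    (hrf : Integrable fun r => r * f r) (hI : IsIGFR f) {k s u : ℝ} (hk : 0 ≤ k) (hs : 0 ≤ s)
    (hu : 0 < u) (h : k * (u - s) * survival f u < stopLoss f u) :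
    k * (u - s) * f u < (1 + k) * survival f u := by
  have htail := mul_mul_stopLoss_le hf0 hf hrf hI hu
  have hP : 0 ≤ stopLoss f u := stopLoss_nonneg hf0 u
  set S := survival f u
  set P := stopLoss f u
  set A := u * f u
  have hS : 0 < S := (survival_nonneg hf0 u).lt_of_ne fun h0 => by
    simp [S, P, ← h0, stopLoss_eq_zero_of_survival_eq_zero hf0 hf hrf h0.symm] at h
  have hA : 0 ≤ A := mul_nonneg hu.le (hf0 u)
  suffices k * (u - s) * A < (1 + k) * u * S by
    simp only [A] at this
    nlinarith
  rcases lt_or_ge (k * A) ((1 + k) * S) with hsmall | hlarge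
  · nlinarith [mul_nonneg (mul_nonneg hk hs) hA, mul_lt_mul_of_pos_left hsmall hu]
  · -- a large failure rate forces the price to be small: `P(u) ≤ k u F̄(u)`
    have hA' : 0 < A := by nlinarith
    have hPle : P ≤ k * u * S := by
      have : (1 + k) * S * P ≤ k * S * (u * S + P) :=
        (mul_le_mul_of_nonneg_right hlarge hP).trans
          (by nlinarith [mul_le_mul_of_nonneg_left htail hk])
      nlinarith
    have : k * (u - s) * A * S < (u * S + P) * S := by
      nlinarith [mul_lt_mul_of_pos_right h hA']
    nlinarith

theorem continuous_marginalPayoff (hf0 : ∀ x, 0 ≤ f x) (hf : Integrable f)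
    (hrf : Integrable fun r => r * f r) (c k s : ℝ) : Continuous (marginalPayoff f c k s) := by
  have hP : Continuous (stopLoss f) :=
    continuous_iff_continuousAt.2 fun t => (hasDerivAt_stopLoss hf0 hf hrf t).continuousAt
  have hS := continuous_survival hf
  unfold marginalPayoff
  fun_prop

theorem marginalPayoff_lt_of_forall_Ioo (hf0 : ∀ x, 0 ≤ f x) (hf : Integrable f)
    (hrf : Integrable fun r => r * f r) (hI : IsIGFR f) {c k s a b : ℝ} (hk : 0 ≤ k)
    (hs : 0 ≤ s) (ha : 0 ≤ a) (hab : a < b) (h : ∀ u ∈ Ioo a b, -c < marginalPayoff f c k s u) :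
    marginalPayoff f c k s b < marginalPayoff f c k s a := by
  rw [← sub_pos, marginalPayoff_sub_marginalPayoff hf0 hf hrf c k s hab.le]
  refine intervalIntegral.intervalIntegral_pos_of_pos_on ?_ (fun u hu => ?_) hab
  · exact ((continuous_survival hf).intervalIntegrable a b).const_mul _ |>.sub
      ((integrable_sub_mul hf hrf s).intervalIntegrable.const_mul _)
  · have := mul_sub_mul_lt_survival hf0 hf hrf hI hk hs (ha.trans_lt hu.1)
      (by have := h u hu; unfold marginalPayoff at this; linarith)
    linarith

theorem Continuous.lt_zero_of_le_zero_of_decreasing_above {Z : ℝ → ℝ} {δ t₁ t₂ : ℝ}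
    (hZ : Continuous Z) (hδ : 0 < δ)
    (hdec : ∀ a b, t₁ ≤ a → a < b → (∀ u ∈ Ioo a b, -δ ≤ Z u) → Z b < Z a)
    (h₁ : Z t₁ ≤ 0) (h₁₂ : t₁ < t₂) : Z t₂ < 0 := by
  by_contra! h₂
  -- `τ`: the last point of `[t₁, t₂]` that is `t₁` or where `Z ≤ -δ`
  obtain ⟨τ, ⟨⟨hτ₁, hτ₂⟩, hτK⟩, hτmax⟩ := (isCompact_Icc (a := t₁) (b := t₂)).inter_right
    (isClosed_singleton.union (isClosed_le hZ continuous_const)) |>.exists_isGreatest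
      ⟨t₁, ⟨le_rfl, h₁₂.le⟩, Or.inl rfl⟩
  have hτZ : Z τ ≤ 0 := hτK.elim (fun h => h ▸ h₁) fun h => h.trans (neg_nonpos.2 hδ.le)
  have hτlt : τ < t₂ := hτ₂.lt_of_ne fun h => by
    rcases hτK with h' | h'
    · exact h₁₂.ne (h' ▸ h)
    · have : Z t₂ ≤ -δ := h ▸ h'
      linarith
  have := hdec τ t₂ hτ₁ hτlt fun u hu => le_of_not_gt fun hu' =>
    (hu.1.trans_le (hτmax ⟨⟨hτ₁.trans hu.1.le, hu.2.le⟩, Or.inr hu'.le⟩)).false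
  linarith

theorem marginalPayoff_neg_of_nonpos_of_lt (hf0 : ∀ x, 0 ≤ f x) (hf : Integrable f)
    (hrf : Integrable fun r => r * f r) (hI : IsIGFR f) {c k s t₁ t₂ : ℝ} (hc : 0 < c)
    (hk : 0 ≤ k) (hs : 0 ≤ s) (ht₁ : 0 ≤ t₁) (h₁ : marginalPayoff f c k s t₁ ≤ 0)
    (h₁₂ : t₁ < t₂) : marginalPayoff f c k s t₂ < 0 :=
  (continuous_marginalPayoff hf0 hf hrf c k s).lt_zero_of_le_zero_of_decreasing_above
    (half_pos hc) (fun _ _ ha hab h => marginalPayoff_lt_of_forall_Ioo hf0 hf hrf hI hk hs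
      (ht₁.trans ha) hab fun u hu => by linarith [h u hu]) h₁ h₁₂

theorem eq_of_marginalPayoff_eq_zero (hf0 : ∀ x, 0 ≤ f x) (hf : Integrable f)
    (hrf : Integrable fun r => r * f r) (hI : IsIGFR f) {c k s t₁ t₂ : ℝ} (hc : 0 < c)
    (hk : 0 ≤ k) (hs : 0 ≤ s) (ht₁ : 0 ≤ t₁) (ht₂ : 0 ≤ t₂) (h₁ : marginalPayoff f c k s t₁ = 0)
    (h₂ : marginalPayoff f c k s t₂ = 0) : t₁ = t₂ := by
  rcases lt_trichotomy t₁ t₂ with h | h | h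
  · linarith [marginalPayoff_neg_of_nonpos_of_lt hf0 hf hrf hI hc hk hs ht₁ h₁.le h]
  · exact h
  · linarith [marginalPayoff_neg_of_nonpos_of_lt hf0 hf hrf hI hc hk hs ht₂ h₂.le h]

theorem exists_marginalPayoff_eq_zero (hf0 : ∀ x, 0 ≤ f x) (hf : Integrable f)
    (hrf : Integrable fun r => r * f r) {c k : ℝ} (hk : 0 ≤ k) (hc : 0 < c)
    (hcP : c < stopLoss f 0) : ∃ t, 0 < t ∧ marginalPayoff f c k 0 t = 0 := by
  obtain ⟨T, hT, hPT⟩ := ((eventually_gt_atTop 0).and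
    ((tendsto_stopLoss_atTop hf0 hf hrf).eventually_lt_const hc)).exists
  have hT0 : marginalPayoff f c k 0 T < 0 := by
    have := mul_nonneg (mul_nonneg hk hT.le) (survival_nonneg hf0 T)
    unfold marginalPayoff
    linarith
  have h00 : 0 < marginalPayoff f c k 0 0 := by
    simp [marginalPayoff, hcP]
  obtain ⟨t, ht, hzero⟩ := intermediate_value_Ioo' hT.le
    (continuous_marginalPayoff hf0 hf hrf c k 0).continuousOn ⟨hT0, h00⟩
  exact ⟨t, ht.1, hzero⟩

section Game

variable {Ω : Type*} [MeasurableSpace Ω] {μ : Measure Ω} {α : Ω → ℝ} {c : ℝ} {n : ℕ}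

theorem sum_update_const (z y : ℝ) (i : Fin n) :
    ∑ j, update (fun _ : Fin n => z) i y j = y + ((n : ℝ) - 1) * z := by
  rw [Finset.sum_update_of_mem (Finset.mem_univ i), Finset.sum_const, Finset.card_sdiff]
  simp [Nat.cast_sub i.pos]

theorem payoff_update_const (hpay : ∀ t, ∫ ω, max (α ω - t) 0 ∂μ = stopLoss f t) (z y : ℝ)
    (i : Fin n) :
    payoff μ α c (update (fun _ => z) i y) i = y * (stopLoss f (y + ((n : ℝ) - 1) * z) - c) := by
  rw [payoff, sum_update_const, hpay, update_self]

theorem isNash_const_iff (hpay : ∀ t, ∫ ω, max (α ω - t) 0 ∂μ = stopLoss f t) (hn : 0 < n)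
    {x : ℝ} : IsNash μ α c (fun _ : Fin n => x) ↔
      0 ≤ x ∧ IsMaxOn (fun y => y * (stopLoss f (y + ((n : ℝ) - 1) * x) - c)) (Ici 0) x := by
  have hconst (i : Fin n) : payoff μ α c (fun _ => x) i =
      x * (stopLoss f (x + ((n : ℝ) - 1) * x) - c) := by
    simpa using payoff_update_const (c := c) hpay x x i
  simp only [IsNash, isMaxOn_iff, mem_Ici, payoff_update_const hpay, hconst]
  exact ⟨fun ⟨hx, h⟩ => ⟨hx ⟨0, hn⟩, h ⟨0, hn⟩⟩, fun ⟨hx, h⟩ => ⟨fun _ => hx, fun _ => h⟩⟩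

theorem hasDerivAt_mul_stopLoss_add (hf0 : ∀ x, 0 ≤ f x) (hf : Integrable f)
    (hrf : Integrable fun r => r * f r) (c s y : ℝ) :
    HasDerivAt (fun y => y * (stopLoss f (y + s) - c)) (marginalPayoff f c 1 s (y + s)) y := by
  have h := ((hasDerivAt_stopLoss hf0 hf hrf (y + s)).comp_add_const y s).sub_const c
  refine ((hasDerivAt_id' y).mul h).congr_deriv ?_
  simp only [marginalPayoff]
  ring

theorem isNash_const_iff_marginalPayoff_eq_zero (hf0 : ∀ x, 0 ≤ f x) (hf : Integrable f)
    (hrf : Integrable fun r => r * f r) (hI : IsIGFR f)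
    (hpay : ∀ t, ∫ ω, max (α ω - t) 0 ∂μ = stopLoss f t) (hc : 0 < c) (hn : 0 < n) {x : ℝ}
    (hx : 0 < x) :
    IsNash μ α c (fun _ : Fin n => x) ↔ marginalPayoff f c (1 / n) 0 (n * x) = 0 := by
  set s := ((n : ℝ) - 1) * x
  have hs : 0 ≤ s := mul_nonneg (sub_nonneg.2 (Nat.one_le_cast.2 hn)) hx.le
  have hsym : marginalPayoff f c 1 s (x + s) = marginalPayoff f c (1 / n) 0 (n * x) := by
    simp only [marginalPayoff, s]
    field_simp
    ring_nf
  have hderiv := hasDerivAt_mul_stopLoss_add hf0 hf hrf c s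
  rw [isNash_const_iff hpay hn, ← hsym]
  constructor
  · rintro ⟨-, hmax⟩
    exact (hmax.isLocalMax (Ici_mem_nhds hx)).hasDerivAt_eq_zero (hderiv x)
  · intro h0
    refine ⟨hx.le, isMaxOn_Ici_of_deriv (hderiv 0).continuousAt (hderiv x).continuousAt
      (fun y _ => (hderiv y).differentiableAt.differentiableWithinAt)
      (fun y _ => (hderiv y).differentiableAt.differentiableWithinAt) (fun y hy => ?_)
      (fun y hy => ?_)⟩
    · rw [(hderiv y).deriv]
      by_contra! hneg
      linarith [marginalPayoff_neg_of_nonpos_of_lt (t₂ := x + s) hf0 hf hrf hI hc zero_le_one hs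
        (add_nonneg hy.1.le hs) hneg.le (by linarith [hy.2])]
    · rw [(hderiv y).deriv]
      exact (marginalPayoff_neg_of_nonpos_of_lt hf0 hf hrf hI hc zero_le_one hs
        (add_nonneg hx.le hs) h0.le (by linarith [mem_Ioi.1 hy])).le

theorem existsUnique_pos_isNash_const (hf0 : ∀ x, 0 ≤ f x) (hf : Integrable f)
    (hrf : Integrable fun r => r * f r) (hI : IsIGFR f)
    (hpay : ∀ t, ∫ ω, max (α ω - t) 0 ∂μ = stopLoss f t) (hc : 0 < c) (hcP : c < stopLoss f 0)
    (hn : 0 < n) : ∃! x : ℝ, 0 < x ∧ IsNash μ α c (fun _ : Fin n => x) := by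
  have hn' : (0 : ℝ) < n := Nat.cast_pos.2 hn
  obtain ⟨t, ht, hroot⟩ :=
    exists_marginalPayoff_eq_zero hf0 hf hrf (k := 1 / n) (by positivity) hc hcP
  refine ⟨t / n, ⟨by positivity, ?_⟩, fun x ⟨hx, hnash⟩ => ?_⟩
  · rwa [isNash_const_iff_marginalPayoff_eq_zero hf0 hf hrf hI hpay hc hn (by positivity),
      mul_div_cancel₀ _ hn'.ne']
  · rw [isNash_const_iff_marginalPayoff_eq_zero hf0 hf hrf hI hpay hc hn hx] at hnash
    rw [eq_div_iff hn'.ne', mul_comm]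
    exact eq_of_marginalPayoff_eq_zero hf0 hf hrf hI hc (by positivity) le_rfl
      (by positivity) ht.le hnash hroot

end Game

section Law

variable {Ω : Type*} [MeasurableSpace Ω] {μ : Measure Ω} {α : Ω → ℝ}

theorem map_eq_withDensity_of_cdf [IsProbabilityMeasure μ] (hα : Measurable α)
    (hf0 : ∀ x, 0 ≤ f x) (hf : Integrable f)
    (hcdf : ∀ x, (μ {ω | α ω ≤ x}).toReal = ∫ u in Iic x, f u) :
    μ.map α = volume.withDensity fun r => ENNReal.ofReal (f r) := by
  have := isFiniteMeasure_withDensity_ofReal hf.2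
  have := Measure.isProbabilityMeasure_map (μ := μ) hα.aemeasurable
  refine Measure.ext_of_Iic _ _ fun x => ?_
  rw [Measure.map_apply hα measurableSet_Iic, withDensity_apply _ measurableSet_Iic,
    ← ofReal_integral_eq_lintegral_ofReal hf.integrableOn (.of_forall hf0), ← hcdf,
    ENNReal.ofReal_toReal (measure_ne_top μ _)]
  rfl

theorem integral_comp_eq_integral_mul (hα : Measurable α) (hfm : Measurable f)
    (hf0 : ∀ x, 0 ≤ f x) (hmap : μ.map α = volume.withDensity fun r => ENNReal.ofReal (f r))
    (g : ℝ → ℝ) (hg : Measurable g) : ∫ ω, g (α ω) ∂μ = ∫ r, g r * f r := by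
  rw [← integral_map hα.aemeasurable hg.aestronglyMeasurable, hmap,
    integral_withDensity_eq_integral_toReal_smul₀ (by fun_prop)
      (.of_forall fun _ => ENNReal.ofReal_lt_top)]
  congr 1 with r
  rw [ENNReal.toReal_ofReal (hf0 r), smul_eq_mul, mul_comm]

theorem integrable_mul_of_map_eq_withDensity (hα : Measurable α) (hfm : Measurable f)
    (hf0 : ∀ x, 0 ≤ f x) (hmap : μ.map α = volume.withDensity fun r => ENNReal.ofReal (f r))
    (hαint : Integrable α μ) : Integrable fun r => r * f r := by
  have h := (integrable_map_measure aestronglyMeasurable_id hα.aemeasurable).2 hαint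
  rw [hmap, integrable_withDensity_iff_integrable_smul' (by fun_prop)
    (.of_forall fun _ => ENNReal.ofReal_lt_top)] at h
  refine h.congr (.of_forall fun r => ?_)
  simp [ENNReal.toReal_ofReal (hf0 r), mul_comm]

end Law

theorem stmt5_general {Ω : Type*} [MeasurableSpace Ω] (μ : Measure Ω) [IsProbabilityMeasure μ]
    (α : Ω → ℝ) (hαmeas : Measurable α)
    (H : EReal)
    (hval : ∀ᵐ ω ∂μ, 0 ≤ α ω ∧ (α ω : EReal) < H)
    (hαint : Integrable α μ)
    (F f : ℝ → ℝ)
    (hF : ∀ x : ℝ, F x = (μ {ω | α ω ≤ x}).toReal)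
    (hfmeas : Measurable f) (hfnonneg : ∀ x, 0 ≤ f x) (hfint : Integrable f)
    (hdens : ∀ x : ℝ, F x = ∫ u in Iic x, f u)
    (c : ℝ) (hc : 0 < c) (hcE : c < ∫ ω, α ω ∂μ)
    (n : ℕ) (hn : 1 ≤ n)
    (hIGFR : ∀ x y : ℝ, 0 < x → x ≤ y → (y : EReal) < H →
      x * f x / (1 - F x) ≤ y * f y / (1 - F y)) :
    ∃! xs : ℝ, 0 < xs ∧ IsNash μ α c (fun _ : Fin n => xs) := by
  have hmap := map_eq_withDensity_of_cdf hαmeas hfnonneg hfint fun x => by rw [← hF, hdens]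
  have htransfer := integral_comp_eq_integral_mul hαmeas hfmeas hfnonneg hmap
  have hpay (t : ℝ) : ∫ ω, max (α ω - t) 0 ∂μ = stopLoss f t :=
    htransfer (fun r => max (r - t) 0) (by fun_prop)
  have hS (x : ℝ) : 1 - F x = survival f x := by
    have hmass : 1 = ∫ r, f r := by simpa using htransfer (fun _ => 1) measurable_const
    rw [hdens, hmass, ← intervalIntegral.integral_Iic_add_Ioi hfint.integrableOn hfint.integrableOn,
      survival, add_sub_cancel_left]
  have hcP : c < stopLoss f 0 := by
    have hmean : ∫ ω, max (α ω - 0) 0 ∂μ = ∫ ω, α ω ∂μ :=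
      integral_congr_ae (hval.mono fun ω h => by simp [h.1])
    rwa [← hpay, hmean]
  have hltH {v : ℝ} (hv : 0 < survival f v) : (v : EReal) < H := by
    by_contra! hHv
    have hle : μ {ω | α ω ≤ v} = 1 := (prob_compl_eq_zero_iff (hαmeas measurableSet_Iic)).1 <|
      ae_iff.1 <| hval.mono fun ω h => EReal.coe_le_coe_iff.1 (h.2.le.trans hHv)
    simp [← hS, hF, hle] at hv
  have hI : IsIGFR f := isIGFR_of_div_le hfnonneg hfint fun u v hu huv hv => by
    simpa only [hS] using hIGFR u v hu huv (hltH hv)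
  exact existsUnique_pos_isNash_const hfnonneg hfint (integrable_mul_of_map_eq_withDensity hαmeas
    hfmeas hfnonneg hmap hαint) hI hpay hc hcP hn

/-- If `α` is IGFR, then the Cournot game has exactly one symmetric pure Nash
equilibrium. -/
theorem stmt5 {Ω : Type*} [MeasurableSpace Ω] (μ : Measure Ω) [IsProbabilityMeasure μ]
    (α : Ω → ℝ) (hαmeas : Measurable α)
    (H : EReal) (hH : 0 < H)
    (hval : ∀ᵐ ω ∂μ, 0 ≤ α ω ∧ (α ω : EReal) < H)
    (hαint : Integrable α μ)
    (F f : ℝ → ℝ)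
    (hF : ∀ x : ℝ, F x = (μ {ω | α ω ≤ x}).toReal)
    (hfmeas : Measurable f) (hfnonneg : ∀ x, 0 ≤ f x) (hfint : Integrable f)
    (hdens : ∀ x : ℝ, F x = ∫ u in Iic x, f u)
    (hFbar : ∀ x : ℝ, 0 ≤ x → (x : EReal) < H → 0 < 1 - F x)
    (c : ℝ) (hc : 0 < c) (hcE : c < ∫ ω, α ω ∂μ)
    (n : ℕ) (hn : 1 ≤ n)
    (hIGFR : ∀ x y : ℝ, 0 < x → x ≤ y → (y : EReal) < H →
      x * f x / (1 - F x) ≤ y * f y / (1 - F y)) :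
    ∃! xs : ℝ, 0 < xs ∧ IsNash μ α c (fun _ : Fin n => xs) :=
  stmt5_general μ α hαmeas H hval hαint F f hF hfmeas hfnonneg hfint hdens c hc hcE n hn hIGFR
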